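/- Achievability of the second octagon edge: for every integer k with 0 ≤ k ≤ Neg(B), there exists a classifier h (predicting the unfavourable class on all of the privileged group A, the correct label on all positives of the unprivileged group B, and the favourable class on exactly k true-negative instances of B) such that Acc(h) = 1 − (Pos(A) + k)/|D| and SPD(h) = −Pos(B)/|B| − k/|B|. Hence every lattice point on the segment between the second and third octagon vertices is achieved, the endpoint k = Neg(B) giving SPD(h) = −1. -/

import Mathlib

open Finset

variable {α : Type*} [DecidableEq α]

/-- Number of instances in `S` whose true label is the favourable class `+`. -/
def PosCount (y : α → Bool) (S : Finset α) : ℕ := (S.filter fun x => y x = true).card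

/-- Number of instances in `S` whose true label is the unfavourable class `−`. -/
def NegCount (y : α → Bool) (S : Finset α) : ℕ := (S.filter fun x => y x = false).card

/-- Predicted favourable rate of classifier `h` on `S`. -/
noncomputable def pPlus (h : α → Bool) (S : Finset α) : ℝ :=
  (S.filter fun x => h x = true).card / S.card

/-- Predicted unfavourable rate of classifier `h` on `S`. -/
noncomputable def pMinus (h : α → Bool) (S : Finset α) : ℝ :=
  (S.filter fun x => h x = false).card / S.card

/-- Accuracy of classifier `h` on dataset `D` with ground truth `y`. -/
noncomputable def Accuracy (y : α → Bool) (D : Finset α) (h : α → Bool) : ℝ :=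
  (D.filter fun x => h x = y x).card / D.card

/-- Statistical Parity Difference of classifier `h`, privileged group `A`,
unprivileged group `D \ A`. -/
noncomputable def SPD (D A : Finset α) (h : α → Bool) : ℝ :=
  pPlus h A - pPlus h (D \ A)

/-! The classifier errs exactly on the positives of `A` and on the `k` flipped negatives `K` of
`B = D \ A`, and every instance it accepts lies in `B`: the positives of `B` together with `K`.
Both unions are disjoint, so counting gives the accuracy and the SPD. -/

theorem accuracy_eq_one_sub_card_errors {β : Type*} (y : β → Bool) {D : Finset β}
    (hD : D.Nonempty) (h : β → Bool) :
    Accuracy y D h = 1 - (#(D.filter fun x => h x ≠ y x) : ℝ) / #D := by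
  have hsplit := card_filter_add_card_filter_not (s := D) (fun x => h x = y x)
  have hD' : (#D : ℝ) ≠ 0 := by exact_mod_cast hD.card_ne_zero
  rw [Accuracy, eq_sub_iff_add_eq, ← add_div, div_eq_one_iff_eq hD']
  exact_mod_cast hsplit

theorem pPlus_eq_zero_of_forall_eq_false {β : Type*} {h : β → Bool} {S : Finset β}
    (hS : ∀ x ∈ S, h x = false) : pPlus h S = 0 := by
  rw [pPlus, filter_false_of_mem fun x hx => by simp [hS x hx]]
  simp

theorem disjoint_of_subset_filter_eq_false {β : Type*} {S K : Finset β} {y : β → Bool}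
    (hK : K ⊆ S.filter fun x => y x = false) (T : Finset β) :
    Disjoint K (T.filter fun x => y x = true) :=
  disjoint_left.2 fun x hxK hxT => by
    simp [(mem_filter.1 (hK hxK)).2] at hxT

def secondEdgeClassifier (A K : Finset α) (y : α → Bool) (x : α) : Bool :=
  if x ∈ K then true else if x ∈ A then false else y x

section

variable {D A K : Finset α} {y : α → Bool}

theorem secondEdgeClassifier_of_mem_privileged (hK : K ⊆ (D \ A).filter fun x => y x = false)
    {x : α} (hx : x ∈ A) : secondEdgeClassifier A K y x = false := by
  have hxK : x ∉ K := fun hxK => (mem_sdiff.1 (mem_filter.1 (hK hxK)).1).2 hx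
  simp [secondEdgeClassifier, hxK, hx]

theorem secondEdgeClassifier_of_mem_flipped {x : α} (hx : x ∈ K) :
    secondEdgeClassifier A K y x = true := by
  simp [secondEdgeClassifier, hx]

theorem secondEdgeClassifier_of_not_mem {x : α} (hxA : x ∉ A) (hxK : x ∉ K) :
    secondEdgeClassifier A K y x = y x := by
  simp [secondEdgeClassifier, hxA, hxK]

theorem filter_secondEdgeClassifier_ne (hSub : A ⊆ D)
    (hK : K ⊆ (D \ A).filter fun x => y x = false) :
    (D.filter fun x => secondEdgeClassifier A K y x ≠ y x)
      = A.filter (fun x => y x = true) ∪ K := by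
  ext x
  by_cases hxK : x ∈ K
  · have hx := hK hxK
    simp only [mem_filter, mem_sdiff] at hx
    simp [secondEdgeClassifier_of_mem_flipped hxK, hx, hxK]
  by_cases hxA : x ∈ A
  · simp [secondEdgeClassifier_of_mem_privileged hK hxA, hxA, hxK, hSub hxA]
  · simp [secondEdgeClassifier_of_not_mem hxA hxK, hxA, hxK]

theorem filter_sdiff_secondEdgeClassifier_eq_true
    (hK : K ⊆ (D \ A).filter fun x => y x = false) :
    ((D \ A).filter fun x => secondEdgeClassifier A K y x = true)
      = K ∪ (D \ A).filter (fun x => y x = true) := by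
  ext x
  by_cases hxK : x ∈ K
  · have hx := hK hxK
    simp only [mem_filter] at hx
    simp [secondEdgeClassifier_of_mem_flipped hxK, hx, hxK]
  by_cases hxA : x ∈ A
  · simp [hxA, hxK]
  · simp [secondEdgeClassifier_of_not_mem hxA hxK, hxA, hxK]

end

theorem octagon_second_edge_achievable_general (D A : Finset α) (y : α → Bool)
    (hSub : A ⊆ D) (hD : D.Nonempty)
    (k : ℕ) (hk : k ≤ NegCount y (D \ A)) :
    ∃ (h : α → Bool) (K : Finset α),
      K ⊆ (D \ A).filter (fun x => y x = false) ∧ K.card = k ∧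
      (∀ x ∈ A, h x = false) ∧ (∀ x ∈ K, h x = true) ∧
      (∀ x ∈ D \ A, x ∉ K → h x = y x) ∧
      Accuracy y D h = 1 - ((PosCount y A : ℝ) + (k : ℝ)) / D.card ∧
      SPD D A h = -((PosCount y (D \ A) : ℝ) / (D \ A).card) - (k : ℝ) / (D \ A).card := by
  obtain ⟨K, hK, rfl⟩ := exists_subset_card_eq hk
  have rejects_privileged : ∀ x ∈ A, secondEdgeClassifier A K y x = false :=
    fun _ => secondEdgeClassifier_of_mem_privileged hK
  have errors : #(D.filter fun x => secondEdgeClassifier A K y x ≠ y x) = PosCount y A + #K := by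
    rw [filter_secondEdgeClassifier_ne hSub hK,
      card_union_of_disjoint (disjoint_of_subset_filter_eq_false hK A).symm, PosCount]
  have accepted : #((D \ A).filter fun x => secondEdgeClassifier A K y x = true)
      = #K + PosCount y (D \ A) := by
    rw [filter_sdiff_secondEdgeClassifier_eq_true hK,
      card_union_of_disjoint (disjoint_of_subset_filter_eq_false hK _), PosCount]
  refine ⟨secondEdgeClassifier A K y, K, hK, rfl, rejects_privileged,
    fun _ => secondEdgeClassifier_of_mem_flipped,
    fun _ hx => secondEdgeClassifier_of_not_mem (mem_sdiff.1 hx).2, ?_, ?_⟩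
  · rw [accuracy_eq_one_sub_card_errors y hD, errors, Nat.cast_add]
  · rw [SPD, pPlus_eq_zero_of_forall_eq_false rejects_privileged, pPlus, accepted]
    push_cast
    ring

/-- achievability of the second octagon edge.  For every
`0 ≤ k ≤ NegCount(B)` the classifier predicting the unfavourable class on all of
`A`, the correct label on all positives of `B = D \ A`, and the favourable
class on exactly `k` true-negative instances of `B` has
`Accuracy = 1 - (PosCount(A)+k)/|D|` and `SPD = -PosCount(B)/|B| - k/|B|`. -/
theorem octagon_second_edge_achievable (D A : Finset α) (y : α → Bool)
    (hSub : A ⊆ D) (hD : D.Nonempty) (hA : A.Nonempty) (hB : (D \ A).Nonempty)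
    (k : ℕ) (hk : k ≤ NegCount y (D \ A)) :
    ∃ (h : α → Bool) (K : Finset α),
      K ⊆ (D \ A).filter (fun x => y x = false) ∧ K.card = k ∧
      (∀ x ∈ A, h x = false) ∧ (∀ x ∈ K, h x = true) ∧
      (∀ x ∈ D \ A, x ∉ K → h x = y x) ∧
      Accuracy y D h = 1 - ((PosCount y A : ℝ) + (k : ℝ)) / D.card ∧
      SPD D A h = -((PosCount y (D \ A) : ℝ) / (D \ A).card) - (k : ℝ) / (D \ A).card :=
  octagon_second_edge_achievable_general D A y hSub hD k hk
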